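/- arXiv:2502.03513 — 5 statements merged into one kernel-verified Lean document; each statement's English description precedes it below -/
import Mathlib

section
/- Assume Hypothesis H. Then there are infinitely many pairs of consecutive elements of A whose difference is not in A; that is, there are infinitely many indices n ≥ 2 such that a_n - a_{n-1} ∉ A (equivalently, j(a_n) > 1 infinitely often). -/
/-!
Under Hypothesis H the quadratics `(130 X + 66)² + 1` and `(130 X + 74)² + 1` are simultaneously
prime infinitely often: both are irreducible, and no prime divides all values of their product,
since their values at `0` are prime to `130` and, at a root of `130 X + 66` modulo `p ∤ 130`, the
product is `8² + 1 = 65`, which divides `130`. For such `n`, `m = 130 n + 66` and `m + 8` lie in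
`A`, while `k² + 1` is divisible by `2`, `5` or `13` for every `k` strictly between them. So `m`
and `m + 8` are consecutive in `A`, and their difference `8` is not in `A` as `65` is composite.
-/

/-- `inA m` : `m ≥ 1` and `m² + 1` is prime, i.e. `m` is an element of the set `A`. -/
def inA (m : ℕ) : Prop := 1 ≤ m ∧ Nat.Prime (m ^ 2 + 1)

/-- The increasing enumeration of `A` (0-indexed): `seqA 0 = a₁ < seqA 1 = a₂ < ⋯`. -/
noncomputable def seqA (n : ℕ) : ℕ := Nat.nth inA n

/-- The Bunyakovsky condition for a finite family of integer polynomials: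
no prime divides the product of their values at every integer. -/
def BunyakovskyCond (l : List (Polynomial ℤ)) : Prop :=
  ∀ p : ℕ, p.Prime → ∃ n : ℤ, ¬ (p : ℤ) ∣ (l.map fun f => f.eval n).prod

/-- Schinzel's Hypothesis H: a finite family of irreducible integer polynomials
with positive leading coefficients satisfying the Bunyakovsky condition is
simultaneously prime at infinitely many positive integers. -/
def HypothesisH : Prop :=
  ∀ l : List (Polynomial ℤ),
    (∀ f ∈ l, Irreducible f) →
    (∀ f ∈ l, 0 < f.leadingCoeff) →
    BunyakovskyCond l →
    {n : ℕ | 0 < n ∧ ∀ f ∈ l, Prime (f.eval (n : ℤ))}.Infinite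

open Polynomial

instance : DecidablePred inA := fun _ => inferInstanceAs (Decidable (_ ∧ _))

namespace Nat

theorem count_eq_count_add_one_of_consecutive {p : ℕ → Prop} [DecidablePred p] {a b : ℕ}
    (ha : p a) (hab : a < b) (hgap : ∀ k ∈ Set.Ioo a b, ¬ p k) :
    count p b = count p a + 1 := by
  have hsucc : count p (a + 1) = count p a + 1 := count_succ_eq_succ_count_iff.mpr ha
  refine le_antisymm ?_ (hsucc ▸ count_monotone p hab)
  by_contra! hlt
  obtain ⟨k, hk, hpk⟩ := exists_of_count_lt_count (hsucc ▸ hlt)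
  exact hgap k ⟨hk.1, hk.2⟩ hpk

end Nat

section AffineSqAddOne

variable {R : Type*} [CommRing R]

noncomputable def affineSqAddOne (a b : R) : R[X] := (C a * X + C b) ^ 2 + 1

@[simp]
lemma eval_affineSqAddOne (a b x : R) : (affineSqAddOne a b).eval x = (a * x + b) ^ 2 + 1 := by
  simp [affineSqAddOne]

lemma affineSqAddOne_eq_quadratic (a b : R) :
    affineSqAddOne a b = C (a ^ 2) * X ^ 2 + C (2 * a * b) * X + C (b ^ 2 + 1) := by
  simp only [affineSqAddOne, map_pow, map_mul, map_add, map_one, map_ofNat]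
  ring

lemma natDegree_affineSqAddOne [NoZeroDivisors R] {a : R} (ha : a ≠ 0) (b : R) :
    (affineSqAddOne a b).natDegree = 2 := by
  rw [affineSqAddOne_eq_quadratic]
  exact natDegree_quadratic (pow_ne_zero 2 ha)

lemma leadingCoeff_affineSqAddOne [NoZeroDivisors R] {a : R} (ha : a ≠ 0) (b : R) :
    (affineSqAddOne a b).leadingCoeff = a ^ 2 := by
  rw [affineSqAddOne_eq_quadratic]
  exact leadingCoeff_quadratic (pow_ne_zero 2 ha)

lemma map_affineSqAddOne {S : Type*} [CommRing S] (f : R →+* S) (a b : R) :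
    (affineSqAddOne a b).map f = affineSqAddOne (f a) (f b) := by
  simp [affineSqAddOne, Polynomial.map_add, Polynomial.map_pow]

end AffineSqAddOne

lemma irreducible_affineSqAddOne {K : Type*} [Field K] [LinearOrder K] [IsStrictOrderedRing K]
    {a : K} (ha : a ≠ 0) (b : K) : Irreducible (affineSqAddOne a b) := by
  refine irreducible_of_degree_le_three_of_not_isRoot (by simp [natDegree_affineSqAddOne ha])
    fun x hx => ?_
  rw [IsRoot, eval_affineSqAddOne] at hx
  nlinarith [sq_nonneg (a * x + b)]

lemma irreducible_affineSqAddOne_int {a b : ℤ} (ha : a ≠ 0) (hab : IsCoprime a (b ^ 2 + 1)) :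
    Irreducible (affineSqAddOne a b) := by
  have hprim : (affineSqAddOne a b).IsPrimitive := by
    intro r hr
    rw [C_dvd_iff_dvd_coeff] at hr
    have h2 := hr 2
    have h0 := hr 0
    simp only [affineSqAddOne_eq_quadratic, coeff_add, coeff_C_mul, coeff_X_pow, coeff_C,
      coeff_X] at h2 h0
    norm_num at h2 h0
    exact hab.pow_left.isUnit_of_dvd' h2 h0
  rw [IsPrimitive.Int.irreducible_iff_irreducible_map_cast hprim, map_affineSqAddOne]
  exact irreducible_affineSqAddOne (by simpa using ha) _

lemma bunyakovskyCond_affineSqAddOne_pair {c b d : ℤ}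
    (hcop : IsCoprime c ((b ^ 2 + 1) * ((b + d) ^ 2 + 1))) (hd : d ^ 2 + 1 ∣ c) :
    BunyakovskyCond [affineSqAddOne c b, affineSqAddOne c (b + d)] := by
  intro p hp
  have hpZ : Prime (p : ℤ) := Nat.prime_iff_prime_int.mp hp
  by_cases hpc : (p : ℤ) ∣ c
  · refine ⟨0, fun hdvd => hpZ.not_isUnit (hcop.isUnit_of_dvd' hpc ?_)⟩
    simpa using hdvd
  · have := Fact.mk hp
    have hc : (c : ZMod p) ≠ 0 := by rwa [Ne, ZMod.intCast_zmod_eq_zero_iff_dvd]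
    obtain ⟨n, hn⟩ := ZMod.intCast_surjective (-(b : ZMod p) / (c : ZMod p))
    have hroot : (c : ZMod p) * n + b = 0 := by rw [hn]; field_simp; ring
    refine ⟨n, fun hdvd => hpc (dvd_trans ?_ hd)⟩
    -- at a root of `c X + b` the product reduces to `d² + 1`, and `d² + 1 ∣ c`
    rw [← ZMod.intCast_zmod_eq_zero_iff_dvd] at hdvd ⊢
    simp only [List.map_cons, List.map_nil, List.prod_cons, List.prod_nil, mul_one,
      eval_affineSqAddOne, Int.cast_mul, Int.cast_add, Int.cast_pow, Int.cast_one] at hdvd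
    rw [← add_assoc, hroot] at hdvd
    push_cast
    simpa using hdvd

lemma inA_of_prime_eval_affineSqAddOne {c b n : ℕ} (hb : 1 ≤ b)
    (h : Prime ((affineSqAddOne (c : ℤ) b).eval (n : ℤ))) : inA (c * n + b) := by
  refine ⟨le_add_left hb, Nat.prime_iff_prime_int.mpr ?_⟩
  simpa using h

lemma HypothesisH.infinite_setOf_inA_and_inA_add (hH : HypothesisH) {c b d : ℕ} (hc : c ≠ 0)
    (hb : 1 ≤ b) (hcop : Nat.Coprime c ((b ^ 2 + 1) * ((b + d) ^ 2 + 1))) (hd : d ^ 2 + 1 ∣ c) :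
    {n : ℕ | inA (c * n + b) ∧ inA (c * n + (b + d))}.Infinite := by
  have hcZ : (c : ℤ) ≠ 0 := by exact_mod_cast hc
  have hcopZ : IsCoprime (c : ℤ) (((b : ℤ) ^ 2 + 1) * (((b : ℤ) + d) ^ 2 + 1)) := by
    exact_mod_cast Nat.isCoprime_iff_coprime.mpr hcop
  refine (hH _ ?_ ?_ (bunyakovskyCond_affineSqAddOne_pair hcopZ (by exact_mod_cast hd))).mono ?_
  · simp only [List.mem_cons, List.not_mem_nil, or_false]
    rintro f (rfl | rfl)
    exacts [irreducible_affineSqAddOne_int hcZ hcopZ.of_mul_right_left,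
      irreducible_affineSqAddOne_int hcZ hcopZ.of_mul_right_right]
  · simp only [List.mem_cons, List.not_mem_nil, or_false]
    rintro f (rfl | rfl) <;> rw [leadingCoeff_affineSqAddOne hcZ] <;> positivity
  · rintro n ⟨-, hprime⟩
    simp only [List.mem_cons, List.not_mem_nil, or_false, forall_eq_or_imp, forall_eq] at hprime
    exact ⟨inA_of_prime_eval_affineSqAddOne hb hprime.1,
      inA_of_prime_eval_affineSqAddOne (le_add_right hb) (by simpa using hprime.2)⟩

lemma not_inA_of_dvd_of_lt {p k : ℕ} (hp : 2 ≤ p) (hdvd : p ∣ k ^ 2 + 1) (hlt : p < k ^ 2 + 1) :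
    ¬ inA k :=
  fun hk => Nat.not_prime_of_dvd_of_lt hdvd hp hlt hk.2

lemma dvd_sq_add_one_mul_add {p c r : ℕ} (hc : p ∣ c) (hr : p ∣ r ^ 2 + 1) (n : ℕ) :
    p ∣ (c * n + r) ^ 2 + 1 := by
  have h : (c * n + r) ^ 2 + 1 = c * (n * (c * n + 2 * r)) + (r ^ 2 + 1) := by ring
  exact h ▸ (hc.mul_right _).add hr

/- `130 * n + 66` is even and `≡ 1` both mod 5 and mod 13, so `k² + 1` is divisible by 2 for odd
`k` in the gap, by 5 for `k = 130 * n + 68, 130 * n + 72` and by 13 for `k = 130 * n + 70`. -/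
lemma not_inA_of_mem_Ioo {n k : ℕ} (hk : k ∈ Set.Ioo (130 * n + 66) (130 * n + 74)) : ¬ inA k := by
  obtain ⟨hk₁, hk₂⟩ := hk
  obtain ⟨r, rfl⟩ : ∃ r, k = 130 * n + r := ⟨k - 130 * n, by omega⟩
  have hr₁ : 66 < r := by omega
  have hr₂ : r < 74 := by omega
  obtain ⟨p, hp, hp130, hpr⟩ : ∃ p, 2 ≤ p ∧ p ∣ 130 ∧ p ∣ r ^ 2 + 1 := by
    interval_cases r <;>
      first | exact ⟨2, by decide⟩ | exact ⟨5, by decide⟩ | exact ⟨13, by decide⟩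
  refine not_inA_of_dvd_of_lt hp (dvd_sq_add_one_mul_add hp130 hpr n) ?_
  have hp_le : p ≤ 130 := Nat.le_of_dvd (by norm_num) hp130
  have hr_le : r ^ 2 ≤ (130 * n + r) ^ 2 := Nat.pow_le_pow_left (le_add_left le_rfl) 2
  nlinarith

lemma count_inA_130_mul_add_74 {n : ℕ} (h : inA (130 * n + 66)) :
    Nat.count inA (130 * n + 74) = Nat.count inA (130 * n + 66) + 1 :=
  Nat.count_eq_count_add_one_of_consecutive h (by omega) fun _ => not_inA_of_mem_Ioo

/-- Assuming Hypothesis H, there are infinitely many indices `n` such that the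
difference of the consecutive elements `aₙ₊₁ - aₙ` of `A` is not in `A`
(i.e. `j(aₙ₊₁) > 1` infinitely often). -/
theorem stmt0 (hH : HypothesisH) :
    {n : ℕ | 1 ≤ n ∧ ¬ inA (seqA n - seqA (n - 1))}.Infinite := by
  have hpairs : {n : ℕ | inA (130 * n + 66) ∧ inA (130 * n + 74)}.Infinite :=
    hH.infinite_setOf_inA_and_inA_add (c := 130) (b := 66) (d := 8)
      (by norm_num) (by norm_num) (by norm_num) (by norm_num)
  refine (hpairs.image (f := fun n => Nat.count inA (130 * n + 74))
    fun n hn n' hn' h => ?_).mono ?_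
  · have := Nat.count_injective hn.2 hn'.2 h
    omega
  · rintro _ ⟨n, ⟨h66, h74⟩, rfl⟩
    dsimp only
    have hprev : seqA (Nat.count inA (130 * n + 74) - 1) = 130 * n + 66 := by
      rw [count_inA_130_mul_add_74 h66, Nat.add_sub_cancel, seqA, Nat.nth_count h66]
    refine ⟨by rw [count_inA_130_mul_add_74 h66]; omega, ?_⟩
    rw [hprev, seqA, Nat.nth_count h74, show 130 * n + 74 - (130 * n + 66) = 8 by omega]
    decide
end

section
/- Let Y ⊆ ℕ be a set of natural density zero and let k be a positive integer. Then there exist k distinct nonnegative integers b_0, b_1, …, b_{k-1}, none of which belong to Y, such that the polynomials f_i(x) = (x - b_i)² + 1, for 0 ≤ i ≤ k-1, satisfy the Bunyakovsky condition: for every prime p there exists an integer x such that p does not divide the product ∏_{i=0}^{k-1} ((x - b_i)² + 1). -/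
open scoped Classical

/-!
Take every `bᵢ` to be a multiple of `(2k)!` outside `Y`; there are infinitely many, because the
multiples of `(2k)!` have density `1 / (2k)!` while `Y` has density zero. A prime `p ≤ 2k` then
divides every `bᵢ`, so at `x = 0` each factor is `≡ 1 (mod p)`. For a prime `p > 2k` the product
is a monic polynomial of degree `2k < p` over `𝔽_p`, so it cannot vanish on all of `𝔽_p`.
-/

open Filter Topology Polynomial

lemma le_card_filter_Icc_mul_add {Y : Set ℕ} {M N : ℕ} (hM : 0 < M)
    (hY : ∀ j, N < j → M * j ∈ Y) (n : ℕ) :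
    n ≤ ((Finset.Icc 1 (M * n)).filter (fun m => m ∈ Y)).card + N := by
  have hsub :
      (Finset.Ioc N n).card ≤ ((Finset.Icc 1 (M * n)).filter (fun m => m ∈ Y)).card := by
    refine Finset.card_le_card_of_injOn (M * ·) (fun j hj => ?_)
      (fun a _ b _ h => Nat.eq_of_mul_eq_mul_left hM h)
    rw [Finset.coe_Ioc, Set.mem_Ioc] at hj
    rw [Finset.mem_coe, Finset.mem_filter, Finset.mem_Icc]
    exact ⟨⟨Nat.mul_pos hM (by omega), Nat.mul_le_mul_left M hj.2⟩, hY j hj.1⟩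
  rw [Nat.card_Ioc] at hsub
  omega

lemma infinite_setOf_dvd_and_not_mem_of_density_zero {Y : Set ℕ}
    (hY : Tendsto (fun n : ℕ => (((Finset.Icc 1 n).filter (fun m => m ∈ Y)).card : ℝ) / n)
      atTop (𝓝 0)) {M : ℕ} (hM : 0 < M) :
    {n : ℕ | M ∣ n ∧ n ∉ Y}.Infinite := by
  by_contra hfin
  obtain ⟨N, hN⟩ := (Set.not_infinite.mp hfin).bddAbove
  have hmul : ∀ j, N < j → M * j ∈ Y := fun j hj => by
    by_contra hj'
    have : M * j ≤ N := hN ⟨dvd_mul_right M j, hj'⟩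
    nlinarith
  have hsub : Tendsto (fun n : ℕ =>
      (((Finset.Icc 1 (M * n)).filter (fun m => m ∈ Y)).card : ℝ) / (M * n : ℕ)) atTop (𝓝 0) :=
    hY.comp (tendsto_id.const_mul_atTop' hM)
  have hlow : Tendsto (fun n : ℕ => (1 - N / n : ℝ) / M) atTop (𝓝 (1 / M)) := by
    simpa using ((tendsto_const_div_atTop_nhds_zero_nat (N : ℝ)).const_sub 1).div_const (M : ℝ)
  have hle : ∀ᶠ n : ℕ in atTop, (1 - N / n : ℝ) / M ≤
      (((Finset.Icc 1 (M * n)).filter (fun m => m ∈ Y)).card : ℝ) / (M * n : ℕ) := by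
    filter_upwards [eventually_gt_atTop 0] with n hn
    have hcard : (n : ℝ) ≤ ((Finset.Icc 1 (M * n)).filter (fun m => m ∈ Y)).card + N := by
      exact_mod_cast le_card_filter_Icc_mul_add hM hmul n
    rw [one_sub_div (by positivity), div_div, Nat.cast_mul, mul_comm]
    gcongr
    linarith
  have := le_of_tendsto_of_tendsto hlow hsub hle
  have : (0 : ℝ) < 1 / M := by positivity
  linarith

lemma monic_prod_sq_add_one {ι R : Type*} [Fintype ι] [CommRing R] (c : ι → R) :
    (∏ i, ((X - C (c i)) ^ 2 + 1)).Monic :=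
  monic_prod_of_monic _ _ fun i _ => by monicity!

lemma natDegree_prod_sq_add_one {ι R : Type*} [Fintype ι] [CommRing R] [Nontrivial R]
    (c : ι → R) : (∏ i, ((X - C (c i)) ^ 2 + 1)).natDegree = 2 * Fintype.card ι := by
  rw [natDegree_prod_of_monic _ _ fun i _ => by monicity!]
  have (i : ι) : ((X - C (c i)) ^ 2 + 1).natDegree = 2 := by compute_degree!
  simp [this, mul_comm]

lemma exists_not_dvd_prod_sq_add_one {ι : Type*} [Fintype ι] {p : ℕ} [Fact p.Prime]
    (b : ι → ℤ) (hp : 2 * Fintype.card ι < p) :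
    ∃ x : ℤ, ¬ (p : ℤ) ∣ ∏ i, ((x - b i) ^ 2 + 1) := by
  obtain ⟨x, hx⟩ := exists_eval_ne_zero_of_natDegree_lt_card _
    (monic_prod_sq_add_one fun i => (b i : ZMod p)).ne_zero
    (by rw [natDegree_prod_sq_add_one, Cardinal.mk_fintype, ZMod.card]; exact_mod_cast hp)
  refine ⟨x.val, ?_⟩
  rw [← ZMod.intCast_zmod_eq_zero_iff_dvd]
  simpa [eval_prod] using hx

lemma not_dvd_prod_sq_add_one_of_dvd {ι : Type*} [Fintype ι] {p : ℤ} (hp : Prime p)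
    {b : ι → ℤ} (hb : ∀ i, p ∣ b i) : ¬ p ∣ ∏ i, ((0 - b i) ^ 2 + 1) := by
  rw [hp.dvd_finsetProd_iff]
  rintro ⟨i, -, hi⟩
  have hsq : p ∣ (0 - b i) ^ 2 := (dvd_sub (dvd_zero p) (hb i)).pow two_ne_zero
  exact hp.not_dvd_one ((dvd_add_right hsq).mp hi)

theorem stmt4_general (Y : Set ℕ)
    (hY : Filter.Tendsto
      (fun n : ℕ => (((Finset.Icc 1 n).filter (fun m => m ∈ Y)).card : ℝ) / n)
      Filter.atTop (nhds 0))
    (k : ℕ) :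
    ∃ b : Fin k → ℕ, Function.Injective b ∧ (∀ i, b i ∉ Y) ∧
      ∀ p : ℕ, p.Prime → ∃ x : ℤ, ¬ (p : ℤ) ∣ ∏ i : Fin k, ((x - (b i : ℤ)) ^ 2 + 1) := by
  let e :=
    (infinite_setOf_dvd_and_not_mem_of_density_zero hY (Nat.factorial_pos (2 * k))).natEmbedding
  refine ⟨fun i => e i, Subtype.val_injective.comp (e.injective.comp Fin.val_injective),
    fun i => (e i).2.2, fun p hp => ?_⟩
  rcases le_or_gt p (2 * k) with hpk | hpk
  · refine ⟨0, not_dvd_prod_sq_add_one_of_dvd (Nat.prime_iff_prime_int.mp hp) fun i => ?_⟩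
    exact Int.natCast_dvd_natCast.mpr ((Nat.dvd_factorial hp.pos hpk).trans (e i).2.1)
  · have := Fact.mk hp
    exact exists_not_dvd_prod_sq_add_one _ (by simpa using hpk)

/-- If `Y ⊆ ℕ` has natural density zero and `k ≥ 1`, then there are `k` distinct
nonnegative integers `b₀, …, b_{k-1}`, none in `Y`, such that the polynomials
`fᵢ(x) = (x - bᵢ)² + 1` satisfy the Bunyakovsky condition. -/
theorem stmt4 (Y : Set ℕ)
    (hY : Filter.Tendsto
      (fun n : ℕ => (((Finset.Icc 1 n).filter (fun m => m ∈ Y)).card : ℝ) / n)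
      Filter.atTop (nhds 0))
    (k : ℕ) (hk : 1 ≤ k) :
    ∃ b : Fin k → ℕ, Function.Injective b ∧ (∀ i, b i ∉ Y) ∧
      ∀ p : ℕ, p.Prime → ∃ x : ℤ, ¬ (p : ℤ) ∣ ∏ i : Fin k, ((x - (b i : ℤ)) ^ 2 + 1) :=
  stmt4_general Y hY k
end

section
/- Assume Hypothesis H. Then liminf_{n→∞} j(a_n) = 1; that is, there are infinitely many indices n ≥ 2 such that a_n - a_{n-1} ∈ A (equivalently, j(a_n) = 1 for infinitely many n). -/
/-!
Apply Hypothesis H to `X² + 1` and `(X + 2)² + 1`: there are infinitely many `n` with `n` and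
`n + 2` both in `A`. Apart from `1, 2`, no two consecutive integers lie in `A`, since for `m ≥ 2`
odd the number `m² + 1` is even and larger than `2`. Hence `n` and `n + 2` are consecutive
elements of `A`, and their difference `2` lies in `A`.
-/

open Polynomial

instance inst_s7 : DecidablePred inA := fun m => by unfold inA; infer_instance

theorem Nat.Prime.even_of_sq_add_one {m : ℕ} (hp : (m ^ 2 + 1).Prime) (hm : m ≠ 1) : Even m := by
  rcases hp.eq_two_or_odd' with h | h
  · exact absurd (by nlinarith : m = 1) hm
  · have : Even (m ^ 2) := by simpa [Nat.odd_add_one, Nat.not_odd_iff_even] using h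
    exact (Nat.even_pow' two_ne_zero).mp this

theorem eq_one_of_inA_of_inA_add_one {m : ℕ} (h : inA m) (h' : inA (m + 1)) : m = 1 := by
  by_contra hm
  have hm_even := h.2.even_of_sq_add_one hm
  have hm1_even := h'.2.even_of_sq_add_one (by have := h.1; omega)
  exact Nat.not_even_iff_odd.mpr hm_even.add_one hm1_even

theorem Nat.nth_count_add_one_of_gap {p : ℕ → Prop} [DecidablePred p] {m : ℕ} (hm : p m)
    (hm1 : ¬ p (m + 1)) (hm2 : p (m + 2)) : nth p (count p m + 1) = m + 2 := by
  have : count p (m + 2) = count p m + 1 := by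
    rw [count_succ, if_neg hm1, count_succ, if_pos hm]
  rw [← this, nth_count hm2]

theorem monic_X_add_C_sq_add_one (a : ℤ) : ((X + C a) ^ 2 + 1 : ℤ[X]).Monic := by
  monicity!

theorem irreducible_X_add_C_sq_add_one (a : ℤ) : Irreducible ((X + C a) ^ 2 + 1 : ℤ[X]) := by
  have hdeg : ((X + C a) ^ 2 + 1 : ℤ[X]).natDegree = 2 := by compute_degree!
  rw [(monic_X_add_C_sq_add_one a).irreducible_iff_roots_eq_zero_of_degree_le_three
    (by rw [hdeg]) (by rw [hdeg]; norm_num), Multiset.eq_zero_iff_forall_notMem]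
  intro x hx
  rw [mem_roots (monic_X_add_C_sq_add_one a).ne_zero, IsRoot, eval_add, eval_pow, eval_add,
    eval_X, eval_C, eval_one] at hx
  nlinarith [sq_nonneg (x + a)]

/-- The product of the two values is `5` at `0` and `17 * 37` at `4`, and these are coprime. -/
theorem bunyakovskyCond_sq_add_one_pair :
    BunyakovskyCond [(X + C 0) ^ 2 + 1, (X + C 2) ^ 2 + 1] := by
  intro p hp
  by_contra! h
  have h0 := h 0
  have h4 := h 4
  norm_num at h0 h4
  have : (p : ℤ) ∣ 1 := by
    have := dvd_sub h0 (dvd_sub h4 (dvd_mul_of_dvd_right h0 125))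
    norm_num at this
    exact this
  exact hp.one_lt.ne' (by exact_mod_cast Int.eq_one_of_dvd_one (by positivity) this)

theorem HypothesisH.infinite_sq_add_one_prime_pairs (hH : HypothesisH) :
    {n : ℕ | 0 < n ∧ (n ^ 2 + 1).Prime ∧ ((n + 2) ^ 2 + 1).Prime}.Infinite := by
  refine (hH [(X + C 0) ^ 2 + 1, (X + C 2) ^ 2 + 1] ?_ ?_ bunyakovskyCond_sq_add_one_pair).mono ?_
  · simp only [List.mem_cons, List.not_mem_nil, or_false]
    rintro f (rfl | rfl) <;> exact irreducible_X_add_C_sq_add_one _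
  · simp only [List.mem_cons, List.not_mem_nil, or_false]
    rintro f (rfl | rfl) <;> rw [(monic_X_add_C_sq_add_one _).leadingCoeff] <;> exact one_pos
  · rintro n ⟨hn, hprime⟩
    have h0 := hprime ((X + C 0) ^ 2 + 1) (by simp)
    have h2 := hprime ((X + C 2) ^ 2 + 1) (by simp)
    simp only [eval_add, eval_pow, eval_X, eval_C, eval_one, add_zero] at h0 h2
    exact ⟨hn, Nat.prime_iff_prime_int.mpr (by exact_mod_cast h0),
      Nat.prime_iff_prime_int.mpr (by exact_mod_cast h2)⟩

/-- Assuming Hypothesis H, `liminf j(aₙ) = 1`: there are infinitely many indices `n`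
such that the difference of consecutive elements `aₙ₊₁ - aₙ` of `A` lies in `A`
(i.e. `j(aₙ₊₁) = 1` infinitely often). -/
theorem stmt7 (hH : HypothesisH) :
    {n : ℕ | 1 ≤ n ∧ inA (seqA n - seqA (n - 1))}.Infinite := by
  set T := {n : ℕ | 0 < n ∧ (n ^ 2 + 1).Prime ∧ ((n + 2) ^ 2 + 1).Prime}
  have hgap : ∀ n ∈ T, inA n ∧ ¬ inA (n + 1) ∧ inA (n + 2) := by
    rintro n ⟨hn, hn0, hn2⟩
    have hA2 : inA (n + 2) := ⟨by omega, hn2⟩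
    exact ⟨⟨hn, hn0⟩, fun hA1 => by have := eq_one_of_inA_of_inA_add_one hA1 hA2; omega, hA2⟩
  have hinj : Set.InjOn (fun n => Nat.count inA n + 1) T := fun a ha b hb hab =>
    Nat.count_injective (hgap a ha).1 (hgap b hb).1 (Nat.succ_injective hab)
  refine (hH.infinite_sq_add_one_prime_pairs.image hinj).mono ?_
  rintro _ ⟨n, hn, rfl⟩
  obtain ⟨hA0, hA1, hA2⟩ := hgap n hn
  refine ⟨Nat.le_add_left 1 _, ?_⟩
  simp only [seqA, Nat.add_sub_cancel, Nat.nth_count_add_one_of_gap hA0 hA1 hA2, Nat.nth_count hA0,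
    Nat.add_sub_cancel_left]
  exact ⟨by norm_num, by norm_num⟩
end

section
/- Assume Hypothesis H. Then Goldbach's other other conjecture holds infinitely often: there are infinitely many elements m of A that can be written as m = b + c with b, c ∈ A. -/
/-!
Since `2 ∈ A` (as `2² + 1 = 5`), it suffices to find infinitely many `n ≥ 1` with both `n² + 1`
and `(n + 2)² + 1` prime, for then `n + 2 ∈ A` is the sum of `n ∈ A` and `2 ∈ A`. Hypothesis H
applies to the monic irreducible pair `X² + 1`, `(X + 2)² + 1`: the products of their values at
`0` and at `4` are `5` and `17 · 37`, which are coprime, so no prime divides all values.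
-/

open Polynomial

theorem bunyakovskyCond_of_isCoprime {l : List ℤ[X]} (a b : ℤ)
    (h : IsCoprime (l.map fun f => f.eval a).prod (l.map fun f => f.eval b).prod) :
    BunyakovskyCond l := by
  intro p hp
  by_contra! hdvd
  exact (Nat.prime_iff_prime_int.mp hp).not_isUnit (h.isUnit_of_dvd' (hdvd a) (hdvd b))

noncomputable def shiftedSqAddOne (s : ℤ) : ℤ[X] := (X + C s) ^ 2 + 1

@[simp]
theorem eval_shiftedSqAddOne (s n : ℤ) : (shiftedSqAddOne s).eval n = (n + s) ^ 2 + 1 := by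
  simp [shiftedSqAddOne]

theorem monic_shiftedSqAddOne (s : ℤ) : (shiftedSqAddOne s).Monic := by
  unfold shiftedSqAddOne; monicity!

theorem natDegree_shiftedSqAddOne (s : ℤ) : (shiftedSqAddOne s).natDegree = 2 := by
  unfold shiftedSqAddOne; compute_degree!

theorem irreducible_shiftedSqAddOne (s : ℤ) : Irreducible (shiftedSqAddOne s) := by
  rw [(monic_shiftedSqAddOne s).irreducible_iff_roots_eq_zero_of_degree_le_three
    (natDegree_shiftedSqAddOne s).ge ((natDegree_shiftedSqAddOne s).trans_le (by norm_num))]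
  refine Multiset.eq_zero_of_forall_notMem fun x hx => ?_
  have hroot := (mem_roots (monic_shiftedSqAddOne s).ne_zero).mp hx
  simp only [IsRoot.def, eval_shiftedSqAddOne] at hroot
  nlinarith [sq_nonneg (x + s)]

theorem nat_prime_of_prime_eval_shiftedSqAddOne {s n : ℕ}
    (h : Prime ((shiftedSqAddOne s).eval (n : ℤ))) : Nat.Prime ((n + s) ^ 2 + 1) := by
  rw [Nat.prime_iff_prime_int]; simpa using h

theorem inA_two : inA 2 := ⟨by norm_num, by norm_num⟩

/-- Assuming Hypothesis H, Goldbach's other other conjecture holds infinitely often: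
there are infinitely many `m ∈ A` expressible as `m = b + c` with `b, c ∈ A`. -/
theorem stmt11 (hH : HypothesisH) :
    {m : ℕ | inA m ∧ ∃ b c : ℕ, inA b ∧ inA c ∧ m = b + c}.Infinite := by
  set l := [shiftedSqAddOne 0, shiftedSqAddOne 2]
  have hcond : BunyakovskyCond l := bunyakovskyCond_of_isCoprime 0 4 <| by
    rw [Int.isCoprime_iff_gcd_eq_one]; simp [l]; rfl
  have htwins := hH l (by simp [l, irreducible_shiftedSqAddOne])
    (by simp [l, (monic_shiftedSqAddOne _).leadingCoeff]) hcond
  refine (htwins.image (f := (· + 2)) (add_left_injective 2).injOn).mono ?_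
  rintro _ ⟨n, ⟨hn, hprime⟩, rfl⟩
  have hb := nat_prime_of_prime_eval_shiftedSqAddOne (s := 0) (hprime _ (by simp [l]))
  have hm := nat_prime_of_prime_eval_shiftedSqAddOne (s := 2) (hprime _ (by simp [l]))
  exact ⟨⟨by simp, hm⟩, n, 2, ⟨hn, hb⟩, inA_two, rfl⟩
end

section
/- Assume Hypothesis H. Then there are infinitely many integers y ≥ 1 such that 65y+1 and 65y+9 are consecutive elements of A whose difference, 8, is not an element of A. -/
/-!
Take `y = 2n + 1`, so that `65y + 1 = 130n + 66` and `65y + 9 = 130n + 74`. The polynomials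
`(130X + 66)² + 1` and `(130X + 74)² + 1` are primitive with no rational root, hence irreducible,
and have no fixed prime divisor: `2, 5, 13` divide neither value at `0`, and any other prime `p`
vanishes on `130X + 66` at some `n`, where the product is `1 · 65`. Hypothesis H then makes both
values prime for infinitely many `n`. Every `m` strictly between is ruled out by a congruence
forcing `5`, `2` or `13` to divide `m² + 1`.
-/

open Polynomial

section LinearSqAddOne

variable {R : Type*} [CommRing R] [IsDomain R] {a : R}

lemma natDegree_linear_sq_add_one (ha : a ≠ 0) (b : R) :
    ((C a * X + C b) ^ 2 + 1 : R[X]).natDegree = 2 := by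
  have hsq : ((C a * X + C b) ^ 2).natDegree = 2 := by
    rw [natDegree_pow, natDegree_linear ha]
  rw [natDegree_add_eq_left_of_natDegree_lt (by rw [hsq, natDegree_one]; norm_num), hsq]

lemma leadingCoeff_linear_sq_add_one (ha : a ≠ 0) (b : R) :
    ((C a * X + C b) ^ 2 + 1 : R[X]).leadingCoeff = a ^ 2 := by
  rw [leadingCoeff_add_of_degree_lt', leadingCoeff_pow, leadingCoeff_linear ha]
  rw [degree_one, degree_pow, degree_linear ha]
  decide

lemma irreducible_linear_sq_add_one {K : Type*} [Field K] [LinearOrder K] [IsStrictOrderedRing K]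
    {a : K} (ha : a ≠ 0) (b : K) : Irreducible ((C a * X + C b) ^ 2 + 1) := by
  refine irreducible_of_degree_le_three_of_not_isRoot
    (by rw [natDegree_linear_sq_add_one ha]; decide) fun x hx => ?_
  simp only [IsRoot, eval_add, eval_pow, eval_mul, eval_C, eval_X, eval_one] at hx
  nlinarith [sq_nonneg (a * x + b)]

end LinearSqAddOne

lemma isPrimitive_of_isCoprime_eval {R : Type*} [CommRing R] {f : R[X]} {x y : R}
    (h : IsCoprime (f.eval x) (f.eval y)) : f.IsPrimitive := fun r hr =>
  h.isUnit_of_dvd' (by simpa using eval_dvd (x := x) hr) (by simpa using eval_dvd (x := y) hr)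

lemma irreducible_int_linear_sq_add_one {a b : ℤ} (ha : a ≠ 0)
    (hf : ((C a * X + C b) ^ 2 + 1 : ℤ[X]).IsPrimitive) :
    Irreducible ((C a * X + C b) ^ 2 + 1 : ℤ[X]) := by
  rw [IsPrimitive.Int.irreducible_iff_irreducible_map_cast hf]
  simpa using irreducible_linear_sq_add_one (K := ℚ) (Int.cast_ne_zero.mpr ha) b

lemma exists_dvd_mul_add {p a : ℤ} (h : IsCoprime p a) (b : ℤ) : ∃ n, p ∣ a * n + b := by
  obtain ⟨u, v, huv⟩ := h
  exact ⟨-b * v, b * u, by linear_combination (-b) * huv⟩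

lemma exists_not_dvd_sq_add_one_mul (p : ℕ) (hp : p.Prime) :
    ∃ n : ℤ, ¬ (p : ℤ) ∣ ((130 * n + 66) ^ 2 + 1) * ((130 * n + 74) ^ 2 + 1) := by
  have hp' := Nat.prime_iff_prime_int.mp hp
  by_cases h130 : (p : ℤ) ∣ 130
  · have hcop : IsCoprime (130 : ℤ) (4357 * 5477) := by
      rw [Int.isCoprime_iff_gcd_eq_one]; rfl
    exact ⟨0, fun h => hp'.not_isUnit (hcop.isUnit_of_dvd' h130 (by simpa using h))⟩
  · obtain ⟨n, hn⟩ := exists_dvd_mul_add (hp'.coprime_iff_not_dvd.mpr h130) 66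
    refine ⟨n, fun h => h130 ?_⟩
    have h0 : 130 * n + 66 ≡ 0 [ZMOD p] := Int.modEq_zero_iff_dvd.mpr hn
    have hprod : ((130 * n + 66) ^ 2 + 1) * ((130 * n + 66 + 8) ^ 2 + 1) ≡
        (0 ^ 2 + 1) * ((0 + 8) ^ 2 + 1) [ZMOD p] := by gcongr
    rw [add_assoc, show (66 : ℤ) + 8 = 74 by norm_num] at hprod
    have h65 : (p : ℤ) ∣ 65 := by
      simpa using Int.modEq_zero_iff_dvd.mp (hprod.symm.trans (Int.modEq_zero_iff_dvd.mpr h))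
    exact h65.mul_left 2

lemma dvd_sq_add_one_of_modEq {p m r : ℕ} (hm : m ≡ r [MOD p]) (hr : p ∣ r ^ 2 + 1) :
    p ∣ m ^ 2 + 1 :=
  Nat.modEq_zero_iff_dvd.mp (((hm.pow 2).add_right 1).trans (Nat.modEq_zero_iff_dvd.mpr hr))

lemma not_inA_of_prime_dvd {p m : ℕ} (hp : p.Prime) (hpm : p < m ^ 2 + 1) (h : p ∣ m ^ 2 + 1) :
    ¬ inA m :=
  fun ⟨_, hm⟩ => hpm.ne ((Nat.prime_dvd_prime_iff_eq hp hm).mp h)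

-- With `m = 65y + k`, `y = 2n + 1` odd and `2 ≤ k ≤ 8`: `k ∈ {2, 3, 7, 8}` makes `m ≡ ±2 (mod 5)`,
-- `k ∈ {4, 6}` makes `m` odd, and `k = 5` makes `m ≡ 5 (mod 13)`.
lemma not_inA_of_lt_of_lt {n m : ℕ} (h₁ : 130 * n + 66 < m) (h₂ : m < 130 * n + 74) :
    ¬ inA m := by
  have hm : 13 < m ^ 2 + 1 := by nlinarith
  have : m ≡ 2 [MOD 5] ∨ m ≡ 3 [MOD 5] ∨ m ≡ 1 [MOD 2] ∨ m ≡ 5 [MOD 13] := by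
    obtain ⟨k, rfl⟩ : ∃ k, m = 130 * n + 66 + k := ⟨m - (130 * n + 66), by omega⟩
    have hk : k < 8 := by omega
    interval_cases k <;> simp only [Nat.ModEq] <;> omega
  rcases this with h | h | h | h <;>
    exact not_inA_of_prime_dvd (by norm_num) (by omega) (dvd_sq_add_one_of_modEq h (by norm_num))

lemma inA_of_prime_int {m : ℕ} (hm : 1 ≤ m) (h : Prime ((m : ℤ) ^ 2 + 1)) : inA m :=
  ⟨hm, Nat.prime_iff_prime_int.mpr (by exact_mod_cast h)⟩

/-- Assuming Hypothesis H, there are infinitely many `y ≥ 1` such that `65y+1` and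
`65y+9` are consecutive elements of `A` (both lie in `A` and no element of `A` lies
strictly between them) whose difference, `8`, is not an element of `A`. -/
theorem stmt13 (hH : HypothesisH) :
    {y : ℕ | 1 ≤ y ∧ inA (65 * y + 1) ∧ inA (65 * y + 9) ∧
      (∀ m : ℕ, 65 * y + 1 < m → m < 65 * y + 9 → ¬ inA m) ∧
      (65 * y + 9) - (65 * y + 1) = 8 ∧ ¬ inA 8}.Infinite := by
  have hirr (b : ℤ) (hb : IsCoprime (b ^ 2 + 1) ((b - 130) ^ 2 + 1)) :
      Irreducible ((C 130 * X + C b) ^ 2 + 1 : ℤ[X]) :=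
    irreducible_int_linear_sq_add_one (by norm_num)
      (isPrimitive_of_isCoprime_eval (x := 0) (y := -1) (by simpa [sub_eq_neg_add] using hb))
  have hS := hH [(C 130 * X + C 66) ^ 2 + 1, (C 130 * X + C 74) ^ 2 + 1]
    (by simp only [List.mem_pair, forall_eq_or_imp, forall_eq]
        exact ⟨hirr 66 (by rw [Int.isCoprime_iff_gcd_eq_one]; rfl),
          hirr 74 (by rw [Int.isCoprime_iff_gcd_eq_one]; rfl)⟩)
    (by simp only [List.mem_pair, forall_eq_or_imp, forall_eq,
          leadingCoeff_linear_sq_add_one (show (130 : ℤ) ≠ 0 by norm_num)]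
        norm_num)
    (fun p hp => by simpa using exists_not_dvd_sq_add_one_mul p hp)
  refine (hS.image fun a _ b _ h => by omega : ((fun n => 2 * n + 1) '' _).Infinite).mono ?_
  rintro _ ⟨n, ⟨-, hn⟩, rfl⟩
  simp only [List.mem_pair, forall_eq_or_imp, forall_eq, eval_add, eval_pow, eval_mul, eval_C,
    eval_X, eval_one] at hn
  dsimp only [Set.mem_ofPred_eq]
  rw [show 65 * (2 * n + 1) + 1 = 130 * n + 66 by ring,
    show 65 * (2 * n + 1) + 9 = 130 * n + 74 by ring]
  refine ⟨by omega, inA_of_prime_int (by omega) (by exact_mod_cast hn.1),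
    inA_of_prime_int (by omega) (by exact_mod_cast hn.2), fun m => not_inA_of_lt_of_lt, by omega,
    fun h => by norm_num [inA] at h⟩
end
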